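/- arXiv:1603.06506 — 3 statements merged into one kernel-verified Lean document; each statement's English description precedes it below -/
import Mathlib

section
/- Let k be a field and A a finite-dimensional k-algebra in which every finite-dimensional projective A-module is injective. Let V be a finite-dimensional A-module, N a simple A-module, and φ : rad(V) → N a nonzero A-module homomorphism. Then φ does not factor through any projective A-module; that is, there exist no finite-dimensional projective A-module P and A-homomorphisms a : rad(V) → P and b : P → N with φ = b ∘ a. -/
/-!
Extend `a : rad V → P` along `rad V ⊆ V`, using that `P` is injective. Then `φ` is the
restriction to `rad V` of a map `V → N`, which carries `rad V = J(A)·V` into `J(A)·N`; this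
is zero because the Jacobson radical annihilates every simple module.
-/

/-- The radical `rad(M) = J(A)·M` of a module `M` over a ring `A`,
where `J(A)` is the Jacobson radical of `A`. -/
def moduleRadical (A : Type) [Ring A] (M : Type) [AddCommGroup M] [Module A M] :
    Submodule A M :=
  (Ideal.jacobson (⊥ : Ideal A)) • (⊤ : Submodule A M)

section

variable {A : Type} [Ring A] {M N : Type} [AddCommGroup M] [Module A M]
  [AddCommGroup N] [Module A N]

theorem moduleRadical_le_jacobson : moduleRadical A M ≤ Module.jacobson A M := by
  rw [moduleRadical, Ideal.jacobson_bot]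
  exact Ring.jacobson_smul_top_le A M

theorem moduleRadical_eq_bot [IsSemisimpleModule A M] : moduleRadical A M = ⊥ :=
  eq_bot_iff.2 <| moduleRadical_le_jacobson.trans (IsSemisimpleModule.jacobson_eq_bot A M).le

theorem map_moduleRadical_le (f : M →ₗ[A] N) :
    (moduleRadical A M).map f ≤ moduleRadical A N := by
  rw [moduleRadical, Submodule.map_smul'']
  exact smul_mono_right _ le_top

theorem LinearMap.comp_moduleRadical_subtype_eq_zero [IsSemisimpleModule A N]
    (f : M →ₗ[A] N) : f ∘ₗ (moduleRadical A M).subtype = 0 := by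
  ext x
  simpa [moduleRadical_eq_bot] using map_moduleRadical_le f (Submodule.mem_map_of_mem x.2)

theorem comp_eq_zero_of_moduleRadical_of_injective {Q : Type} [AddCommGroup Q] [Module A Q]
    [Module.Injective A Q] [IsSemisimpleModule A N]
    (a : moduleRadical A M →ₗ[A] Q) (b : Q →ₗ[A] N) : b ∘ₗ a = 0 := by
  obtain ⟨a', rfl⟩ :=
    Module.Injective.extension_property A Q _ M _ (moduleRadical A M).injective_subtype a
  exact (b ∘ₗ a').comp_moduleRadical_subtype_eq_zero

end

theorem stmt0_general
    (A : Type) [Ring A]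
    (hFrobenius : ∀ P : ModuleCat.{0} A, Module.Finite A P →
      Module.Projective A P → Module.Injective A P)
    (V : Type) [AddCommGroup V] [Module A V]
    (N : Type) [AddCommGroup N] [Module A N]
    (hN : IsSimpleModule A N)
    (φ : ↥(moduleRadical A V) →ₗ[A] N) (hφ : φ ≠ 0) :
    ¬ ∃ P : ModuleCat.{0} A, Module.Finite A P ∧ Module.Projective A P ∧
      ∃ (a : ↥(moduleRadical A V) →ₗ[A] P) (b : ↥P →ₗ[A] N), φ = b ∘ₗ a := by
  rintro ⟨P, hfin, hproj, a, b, rfl⟩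
  have := hFrobenius P hfin hproj
  exact hφ (comp_eq_zero_of_moduleRadical_of_injective a b)

/-- Over a finite-dimensional `k`-algebra `A` in which every
finite-dimensional projective module is injective, a nonzero homomorphism
`φ : rad(V) → N` with `N` simple cannot factor through a projective module. -/
theorem stmt0
    (k : Type) [Field k] (A : Type) [Ring A] [Algebra k A] [FiniteDimensional k A]
    (hFrobenius : ∀ P : ModuleCat.{0} A, Module.Finite A P →
      Module.Projective A P → Module.Injective A P)
    (V : Type) [AddCommGroup V] [Module A V] [Module k V] [IsScalarTower k A V]
    [FiniteDimensional k V]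
    (N : Type) [AddCommGroup N] [Module A N] [Module k N] [IsScalarTower k A N]
    [FiniteDimensional k N]
    (hN : IsSimpleModule A N)
    (φ : ↥(moduleRadical A V) →ₗ[A] N) (hφ : φ ≠ 0) :
    ¬ ∃ P : ModuleCat.{0} A, Module.Finite A P ∧ Module.Projective A P ∧
      ∃ (a : ↥(moduleRadical A V) →ₗ[A] P) (b : ↥P →ₗ[A] N), φ = b ∘ₗ a :=
  stmt0_general A hFrobenius V N hN φ hφ
end

section
/- Let k be a field and A a finite-dimensional k-algebra in which every finite-dimensional projective A-module is injective. Let P be a finite-dimensional projective A-module, W a submodule of rad(P) (as is the case for every syzygy Ω^n V, n ≥ 1, in a minimal projective resolution of a module V), N a simple A-module, and φ : W → N a nonzero A-module homomorphism. Then φ does not factor through any projective A-module. -/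
section Radical

variable {A : Type} [Ring A] {M N : Type} [AddCommGroup M] [Module A M]
  [AddCommGroup N] [Module A N]

theorem moduleRadical_le_ker [IsSemisimpleModule A N] (f : M →ₗ[A] N) :
    moduleRadical A M ≤ LinearMap.ker f := by
  intro x hx
  have hfx := Module.map_jacobson_le f (Submodule.mem_map_of_mem (moduleRadical_le_jacobson hx))
  rwa [IsSemisimpleModule.jacobson_eq_bot, Submodule.mem_bot] at hfx

theorem comp_eq_zero_of_le_moduleRadical {F : Type} [AddCommGroup F] [Module A F]
    [Module.Injective A F] [IsSemisimpleModule A N] {W : Submodule A M}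
    (hW : W ≤ moduleRadical A M) (a : W →ₗ[A] F) (b : F →ₗ[A] N) : b ∘ₗ a = 0 := by
  obtain ⟨h, rfl⟩ := Module.Injective.extension_property A F W M W.subtype W.injective_subtype a
  ext w
  exact moduleRadical_le_ker (b ∘ₗ h) (hW w.2)

end Radical

section FiniteFreeFactorization

variable {R M N P ι : Type*} [Ring R] [AddCommGroup M] [Module R M] [AddCommGroup N]
  [Module R N] [AddCommGroup P] [Module R P]

theorem Finsupp.exists_finset_range_le_supported [Module.Finite R M] (f : M →ₗ[R] ι →₀ R) :
    ∃ S : Finset ι, LinearMap.range f ≤ Finsupp.supported R R (S : Set ι) := by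
  classical
  obtain ⟨G, hG⟩ : (LinearMap.range f).FG := by
    rw [LinearMap.range_eq_map]
    exact (Module.Finite.fg_top).map f
  refine ⟨G.biUnion Finsupp.support, ?_⟩
  rw [← hG]
  refine (Finsupp.span_le_supported_biUnion_support R _).trans (Finsupp.supported_mono ?_)
  simp

theorem Module.Projective.exists_finsupp_factorization [Module.Projective R P] [Module.Finite R M]
    (a : M →ₗ[R] P) (b : P →ₗ[R] N) :
    ∃ (S : Finset P) (a' : M →ₗ[R] S →₀ R) (b' : (S →₀ R) →ₗ[R] N), b ∘ₗ a = b' ∘ₗ a' := by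
  classical
  obtain ⟨s, hs⟩ := Module.projective_def'.mp ‹Module.Projective R P›
  obtain ⟨S, hS⟩ := Finsupp.exists_finset_range_le_supported (s ∘ₗ a)
  let e := Finsupp.supportedEquivFinsupp (M := R) (R := R) (S : Set P)
  refine ⟨S, e.toLinearMap ∘ₗ (s ∘ₗ a).codRestrict _ fun m ↦ hS ⟨m, rfl⟩,
    b ∘ₗ Finsupp.linearCombination R id ∘ₗ (Finsupp.supported R R (S : Set P)).subtype ∘ₗ
      e.symm.toLinearMap, ?_⟩
  ext m
  simp [← LinearMap.comp_apply (Finsupp.linearCombination R id), hs]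

end FiniteFreeFactorization

theorem stmt1_general
    (k : Type) [Field k] (A : Type) [Ring A] [Algebra k A]
    (hFrobenius : ∀ P : ModuleCat.{0} A, Module.Finite A P →
      Module.Projective A P → Module.Injective A P)
    (P₀ : Type) [AddCommGroup P₀] [Module A P₀] [Module k P₀] [IsScalarTower k A P₀]
    [FiniteDimensional k P₀]
    (W : Submodule A P₀) (hW : W ≤ moduleRadical A P₀)
    (N : Type) [AddCommGroup N] [Module A N]
    (hN : IsSimpleModule A N)
    (φ : ↥W →ₗ[A] N) (hφ : φ ≠ 0) :
    ¬ ∃ P : ModuleCat.{0} A, Module.Projective A P ∧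
      ∃ (a : ↥W →ₗ[A] P) (b : ↥P →ₗ[A] N), φ = b ∘ₗ a := by
  rintro ⟨P, hP, a, b, rfl⟩
  have : IsNoetherian A P₀ := isNoetherian_of_tower k inferInstance
  obtain ⟨S, a', b', hfac⟩ := Module.Projective.exists_finsupp_factorization a b
  have := hFrobenius (ModuleCat.of A (S →₀ A)) inferInstance inferInstance
  exact hφ (hfac ▸ comp_eq_zero_of_le_moduleRadical hW a' b')

/-- Over a finite-dimensional `k`-algebra `A` in which every
finite-dimensional projective module is injective, if `P₀` is a finite-dimensional
projective module, `W ⊆ rad(P₀)` a submodule (as is the case for syzygies `Ω^n V`,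
`n ≥ 1`), `N` simple, then a nonzero homomorphism `φ : W → N` cannot factor
through a projective module. -/
theorem stmt1
    (k : Type) [Field k] (A : Type) [Ring A] [Algebra k A] [FiniteDimensional k A]
    (hFrobenius : ∀ P : ModuleCat.{0} A, Module.Finite A P →
      Module.Projective A P → Module.Injective A P)
    (P₀ : Type) [AddCommGroup P₀] [Module A P₀] [Module k P₀] [IsScalarTower k A P₀]
    [FiniteDimensional k P₀]
    (hP₀ : Module.Projective A P₀)
    (W : Submodule A P₀) (hW : W ≤ moduleRadical A P₀)
    (N : Type) [AddCommGroup N] [Module A N] [Module k N] [IsScalarTower k A N]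
    [FiniteDimensional k N]
    (hN : IsSimpleModule A N)
    (φ : ↥W →ₗ[A] N) (hφ : φ ≠ 0) :
    ¬ ∃ P : ModuleCat.{0} A, Module.Projective A P ∧
      ∃ (a : ↥W →ₗ[A] P) (b : ↥P →ₗ[A] N), φ = b ∘ₗ a :=
  stmt1_general k A hFrobenius P₀ W hW N hN φ hφ
end

section
/- Let k be a field and A a finite-dimensional k-algebra in which every finite-dimensional injective A-module is projective and every finite-dimensional projective A-module is injective. Let Q be a finite-dimensional injective A-module, U a submodule of Q containing the socle soc(Q) (as is the case for every cosyzygy Ω^{-n} V, n ≥ 1, arising from a minimal injective resolution of a module V), N a simple A-module, and φ : N → Q/U a nonzero A-module homomorphism. Then φ does not factor through any projective A-module. -/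
/-- The socle of a module: the sum of all its simple submodules. -/
def moduleSocle (A : Type) [Ring A] (M : Type) [AddCommGroup M] [Module A M] :
    Submodule A M :=
  sSup {S : Submodule A M | IsSimpleModule A ↥S}

/-!
By projectivity of `P`, a factorisation `N → P → Q/U` lifts to a map `N → Q`. The image of
the simple module `N` in `Q` is zero or simple, so it lies in the socle, hence in `U`, and
therefore the composite `N → Q/U` vanishes.
-/

theorem range_le_moduleSocle_of_isSimpleModule {A : Type} [Ring A]
    {M : Type} {N : Type*} [AddCommGroup N] [Module A N] [AddCommGroup M] [Module A M]
    [IsSimpleModule A N] (f : N →ₗ[A] M) : LinearMap.range f ≤ moduleSocle A M := by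
  rcases f.injective_or_eq_zero with hf | rfl
  · exact le_sSup (IsSimpleModule.congr (LinearEquiv.ofInjective f hf).symm)
  · simp

theorem mkQ_comp_eq_zero_of_moduleSocle_le {A : Type} [Ring A]
    {Q : Type} {N : Type*} [AddCommGroup N] [Module A N] [AddCommGroup Q] [Module A Q]
    [IsSimpleModule A N] {U : Submodule A Q} (hU : moduleSocle A Q ≤ U) (f : N →ₗ[A] Q) :
    U.mkQ ∘ₗ f = 0 := by
  rw [← LinearMap.range_le_ker_iff, Submodule.ker_mkQ]
  exact (range_le_moduleSocle_of_isSimpleModule f).trans hU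

theorem eq_zero_of_factors_through_projective {A : Type} [Ring A]
    {Q : Type} {N P : Type*} [AddCommGroup N] [Module A N] [AddCommGroup Q] [Module A Q]
    [AddCommGroup P] [Module A P] [Module.Projective A P]
    [IsSimpleModule A N] {U : Submodule A Q} (hU : moduleSocle A Q ≤ U)
    (a : N →ₗ[A] P) (b : P →ₗ[A] Q ⧸ U) : b ∘ₗ a = 0 := by
  obtain ⟨b', hb'⟩ := Module.projective_lifting_property U.mkQ b U.mkQ_surjective
  rw [← hb', LinearMap.comp_assoc]
  exact mkQ_comp_eq_zero_of_moduleSocle_le hU (b' ∘ₗ a)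

theorem stmt2_general
    (A : Type) [Ring A]
    (Q : Type) [AddCommGroup Q] [Module A Q]
    (U : Submodule A Q) (hU : moduleSocle A Q ≤ U)
    (N : Type) [AddCommGroup N] [Module A N]
    (hN : IsSimpleModule A N)
    (φ : N →ₗ[A] Q ⧸ U) (hφ : φ ≠ 0) :
    ¬ ∃ P : ModuleCat.{0} A, Module.Projective A P ∧
      ∃ (a : N →ₗ[A] P) (b : ↥P →ₗ[A] Q ⧸ U), φ = b ∘ₗ a := by
  rintro ⟨P, hP, a, b, rfl⟩
  exact hφ (eq_zero_of_factors_through_projective hU a b)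

/-- Over a finite-dimensional `k`-algebra `A` in which every
finite-dimensional injective module is projective and vice versa, if `Q` is a
finite-dimensional injective module, `U` a submodule with `soc(Q) ⊆ U` (as is the
case for cosyzygies `Ω^{-n} V`, `n ≥ 1`), and `N` simple, then a nonzero
homomorphism `φ : N → Q/U` cannot factor through a projective module. -/
theorem stmt2
    (k : Type) [Field k] (A : Type) [Ring A] [Algebra k A] [FiniteDimensional k A]
    (hInjProj : ∀ P : ModuleCat.{0} A, Module.Finite A P →
      Module.Injective A P → Module.Projective A P)
    (hProjInj : ∀ P : ModuleCat.{0} A, Module.Finite A P →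
      Module.Projective A P → Module.Injective A P)
    (Q : Type) [AddCommGroup Q] [Module A Q] [Module k Q] [IsScalarTower k A Q]
    [FiniteDimensional k Q]
    (hQ : Module.Injective A Q)
    (U : Submodule A Q) (hU : moduleSocle A Q ≤ U)
    (N : Type) [AddCommGroup N] [Module A N] [Module k N] [IsScalarTower k A N]
    [FiniteDimensional k N]
    (hN : IsSimpleModule A N)
    (φ : N →ₗ[A] Q ⧸ U) (hφ : φ ≠ 0) :
    ¬ ∃ P : ModuleCat.{0} A, Module.Projective A P ∧
      ∃ (a : N →ₗ[A] P) (b : ↥P →ₗ[A] Q ⧸ U), φ = b ∘ₗ a :=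
  stmt2_general A Q U hU N hN φ hφ
end
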